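/- arXiv:2011.10475 — 5 statements merged into one kernel-verified Lean document; each statement's English description precedes it below -/
import Mathlib

section
/- Let A = F·P. For every u ∈ ℂ^M, the PhaseCut quadratic form satisfies uᴴ·M_b·u = Σ_{m ∉ Λ} |z(u)_m|², i.e., the PhaseCut cost u^*·diag(b)·(I − A·Aᴴ)·diag(b)·u equals the squared ℓ²-norm of the restriction of z(u) = Fᴴ·(b ⊙ u) to the complement of the support set Λ. -/
open Matrix Finset

/-!
With `w = b ⊙ u` the cost is `wᴴ (I - F P Pᴴ Fᴴ) w`. Since `F` is unitary,
`I - F P Pᴴ Fᴴ = F (I - P Pᴴ) Fᴴ`, so the cost is `zᴴ (I - P Pᴴ) z` with `z = Fᴴ w`, and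
`I - P Pᴴ` is the coordinate projection onto the complement of `Λ`.
-/

namespace Matrix

variable {m n R : Type*} [Fintype m]

theorem star_dotProduct_mul_mul_conjTranspose_mulVec [Fintype n] [CommSemiring R] [StarRing R]
    (C : Matrix m n R) (B : Matrix n n R) (u : m → R) :
    star u ⬝ᵥ ((C * B * Cᴴ) *ᵥ u) = star (Cᴴ *ᵥ u) ⬝ᵥ (B *ᵥ (Cᴴ *ᵥ u)) := by
  rw [← mulVec_mulVec, ← mulVec_mulVec, dotProduct_mulVec, star_mulVec,
    conjTranspose_conjTranspose]

theorem conjTranspose_mulVec_eq_comp [DecidableEq m] [Semiring R] [StarRing R] (emb : n → m)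
    (P : Matrix m n R) (hP : ∀ i j, P i j = if i = emb j then 1 else 0) (z : m → R) :
    Pᴴ *ᵥ z = z ∘ emb := by
  ext j
  simp [mulVec, dotProduct, hP, apply_ite star]

end Matrix

theorem Complex.sum_star_mul_self {ι : Type*} (s : Finset ι) (v : ι → ℂ) :
    ∑ i ∈ s, star (v i) * v i = ((∑ i ∈ s, ‖v i‖ ^ 2 : ℝ) : ℂ) := by
  push_cast
  exact sum_congr rfl fun i _ => Complex.conj_mul' (v i)

theorem star_dotProduct_one_sub_mul_conjTranspose_mulVec {m n : Type*} [Fintype m]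
    [DecidableEq m] [Fintype n] (emb : n → m) (hemb : Function.Injective emb)
    (P : Matrix m n ℂ) (hP : ∀ i j, P i j = if i = emb j then 1 else 0) (z : m → ℂ) :
    star z ⬝ᵥ ((1 - P * Pᴴ) *ᵥ z) = ((∑ i ∈ (univ.image emb)ᶜ, ‖z i‖ ^ 2 : ℝ) : ℂ) := by
  classical
  have hproj : star z ⬝ᵥ ((P * Pᴴ) *ᵥ z) = ∑ i ∈ univ.image emb, star (z i) * z i := by
    nth_rw 1 [← Matrix.mul_one P]
    rw [star_dotProduct_mul_mul_conjTranspose_mulVec, one_mulVec,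
      conjTranspose_mulVec_eq_comp emb P hP, sum_image hemb.injOn]
    rfl
  rw [sub_mulVec, one_mulVec, dotProduct_sub, hproj, ← Complex.sum_star_mul_self,
    sub_eq_iff_eq_add, sum_compl_add_sum]
  rfl

theorem phasecut_cost_eq_leakage_general
    (M N : ℕ)
    (F : Matrix (Fin M) (Fin M) ℂ) (hF : Fᴴ * F = 1)
    (emb : Fin N → Fin M) (hemb : Function.Injective emb)
    (P : Matrix (Fin M) (Fin N) ℂ)
    (hP : ∀ i j, P i j = if i = emb j then 1 else 0)
    (A : Matrix (Fin M) (Fin N) ℂ) (hA : A = F * P)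
    (b : Fin M → ℝ)
    (z : (Fin M → ℂ) → Fin M → ℂ)
    (hz : ∀ u, z u = Fᴴ *ᵥ (fun m => (b m : ℂ) * u m))
    (Mb : Matrix (Fin M) (Fin M) ℂ)
    (hMb : Mb = Matrix.diagonal (fun m => (b m : ℂ)) * (1 - A * Aᴴ) *
        Matrix.diagonal (fun m => (b m : ℂ)))
    (u : Fin M → ℂ) :
    star u ⬝ᵥ (Mb *ᵥ u) =
      ((∑ m ∈ (Finset.image emb Finset.univ)ᶜ, ‖z u m‖ ^ 2 : ℝ) : ℂ) := by
  set D := diagonal fun m => (b m : ℂ)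
  have hD : Dᴴ = D := by simp [D, diagonal_conjTranspose]
  have hDu : Dᴴ *ᵥ u = fun m => (b m : ℂ) * u m := by ext; simp [hD, D, mulVec_diagonal]
  have hunitary : F * (1 - P * Pᴴ) * Fᴴ = 1 - A * Aᴴ := by
    rw [hA, conjTranspose_mul, Matrix.mul_sub, Matrix.sub_mul, Matrix.mul_one,
      mul_eq_one_comm.mp hF]
    simp only [Matrix.mul_assoc]
  calc star u ⬝ᵥ (Mb *ᵥ u)
      = star (Dᴴ *ᵥ u) ⬝ᵥ ((F * (1 - P * Pᴴ) * Fᴴ) *ᵥ (Dᴴ *ᵥ u)) := by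
        rw [hMb, hunitary, ← star_dotProduct_mul_mul_conjTranspose_mulVec, hD]
    _ = star (z u) ⬝ᵥ ((1 - P * Pᴴ) *ᵥ z u) := by
        rw [star_dotProduct_mul_mul_conjTranspose_mulVec, hDu, hz]
    _ = _ := star_dotProduct_one_sub_mul_conjTranspose_mulVec emb hemb P hP (z u)

/-- **PhaseCut cost as energy leakage outside the support.**
`uᴴ · M_b · u = Σ_{m ∉ Λ} |z(u)_m|²` where `M_b = diag(b)(I − AAᴴ)diag(b)`,
`A = F·P` and `z(u) = Fᴴ·(b ⊙ u)`. -/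
theorem phasecut_cost_eq_leakage
    (M N : ℕ) (hM : 0 < M) (hN : 0 < N)
    (F : Matrix (Fin M) (Fin M) ℂ) (hF : Fᴴ * F = 1)
    (emb : Fin N → Fin M) (hemb : Function.Injective emb)
    (P : Matrix (Fin M) (Fin N) ℂ)
    (hP : ∀ i j, P i j = if i = emb j then 1 else 0)
    (A : Matrix (Fin M) (Fin N) ℂ) (hA : A = F * P)
    (b : Fin M → ℝ) (hb : ∀ m, 0 ≤ b m)
    (z : (Fin M → ℂ) → Fin M → ℂ)
    (hz : ∀ u, z u = Fᴴ *ᵥ (fun m => (b m : ℂ) * u m))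
    (Mb : Matrix (Fin M) (Fin M) ℂ)
    (hMb : Mb = Matrix.diagonal (fun m => (b m : ℂ)) * (1 - A * Aᴴ) *
        Matrix.diagonal (fun m => (b m : ℂ)))
    (u : Fin M → ℂ) :
    star u ⬝ᵥ (Mb *ᵥ u) =
      ((∑ m ∈ (Finset.image emb Finset.univ)ᶜ, ‖z u m‖ ^ 2 : ℝ) : ℂ) :=
  phasecut_cost_eq_leakage_general M N F hF emb hemb P hP A hA b z hz Mb hMb u
end

section
/- Let A = F·P. If x ∈ ℂ^N satisfies ‖A·x − c‖ = ‖A·(Aᴴ·c) − c‖ for some c ∈ ℂ^M, then x = Aᴴ·c; i.e., the minimizer of the least-squares objective ‖A·x − c‖ is unique and equals Aᴴ·c. -/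
open Matrix Finset

/-!
Since `F` is unitary and `P` has orthonormal columns, `Aᴴ * A = 1`. The residual then splits
orthogonally as `A x - c = A (x - Aᴴ c) + (A Aᴴ c - c)`, and `A` preserves norms, so Pythagoras gives
`‖A x - c‖² = ‖x - Aᴴ c‖² + ‖A Aᴴ c - c‖²`. Equality of the two residual norms forces `x = Aᴴ c`.
-/

/-- The Euclidean ℓ²-norm of a vector in ℂ^M. -/
noncomputable def euclNorm {M : ℕ} (v : Fin M → ℂ) : ℝ :=
  Real.sqrt (∑ m, ‖v m‖ ^ 2)

namespace LinearMap

variable {𝕜 E F : Type*} [RCLike 𝕜] [NormedAddCommGroup E] [InnerProductSpace 𝕜 E]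
  [NormedAddCommGroup F] [InnerProductSpace 𝕜 F] [FiniteDimensional 𝕜 E] [FiniteDimensional 𝕜 F]
  {T : E →ₗ[𝕜] F}

lemma norm_map_of_adjoint_comp_self (hT : T.adjoint ∘ₗ T = id) (x : E) : ‖T x‖ = ‖x‖ := by
  rw [norm_eq_sqrt_re_inner (𝕜 := 𝕜), norm_eq_sqrt_re_inner (𝕜 := 𝕜), ← adjoint_inner_right,
    ← comp_apply, hT, id_apply]

lemma inner_map_sub_self_eq_zero_of_adjoint_comp_self (hT : T.adjoint ∘ₗ T = id) (x : E) (c : F) :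
    inner 𝕜 (T x) (T (T.adjoint c) - c) = 0 := by
  rw [← adjoint_inner_right, map_sub, ← comp_apply, hT, id_apply, sub_self, inner_zero_right]

lemma norm_map_sub_sq_of_adjoint_comp_self (hT : T.adjoint ∘ₗ T = id) (x : E) (c : F) :
    ‖T x - c‖ ^ 2 = ‖x - T.adjoint c‖ ^ 2 + ‖T (T.adjoint c) - c‖ ^ 2 := by
  have hsplit : T x - c = T (x - T.adjoint c) + (T (T.adjoint c) - c) := by
    rw [map_sub]; abel
  rw [hsplit, @norm_add_sq 𝕜, inner_map_sub_self_eq_zero_of_adjoint_comp_self hT, map_zero,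
    mul_zero, add_zero, norm_map_of_adjoint_comp_self hT]

lemma eq_adjoint_of_norm_map_sub_eq (hT : T.adjoint ∘ₗ T = id) {x : E} {c : F}
    (hx : ‖T x - c‖ = ‖T (T.adjoint c) - c‖) : x = T.adjoint c := by
  have h := norm_map_sub_sq_of_adjoint_comp_self hT x c
  rwa [hx, eq_comm, add_eq_right, sq_eq_zero_iff, norm_sub_eq_zero_iff] at h

end LinearMap

namespace Matrix

variable {𝕜 m n : Type*} [RCLike 𝕜] [Fintype m] [DecidableEq m] [Fintype n] [DecidableEq n]

lemma eq_conjTranspose_mulVec_of_norm_eq {A : Matrix m n 𝕜} (hA : Aᴴ * A = 1) {x : n → 𝕜}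
    {c : m → 𝕜} (hx : ‖WithLp.toLp 2 (A *ᵥ x - c)‖ = ‖WithLp.toLp 2 (A *ᵥ (Aᴴ *ᵥ c) - c)‖) :
    x = Aᴴ *ᵥ c := by
  have hT : (toEuclideanLin A).adjoint ∘ₗ toEuclideanLin A = LinearMap.id := by
    rw [← toEuclideanLin_conjTranspose_eq_adjoint, ← toLpLin_mul_same, hA, toLpLin_one]
  have key := LinearMap.eq_adjoint_of_norm_map_sub_eq hT (x := WithLp.toLp 2 x)
    (c := WithLp.toLp 2 c) (by simpa [← toEuclideanLin_conjTranspose_eq_adjoint] using hx)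
  simpa [← toEuclideanLin_conjTranspose_eq_adjoint] using congrArg WithLp.ofLp key

omit [Fintype n] in
lemma conjTranspose_one_submatrix_mul_self {α : Type*} [Semiring α] [StarRing α]
    {e : n → m} (he : Function.Injective e) :
    ((1 : Matrix m m α).submatrix id e)ᴴ * (1 : Matrix m m α).submatrix id e = 1 := by
  rw [conjTranspose_submatrix, conjTranspose_one, ← submatrix_mul _ _ _ _ _ Function.bijective_id,
    Matrix.one_mul, submatrix_one _ he]

end Matrix

lemma euclNorm_eq_norm_toLp {M : ℕ} (v : Fin M → ℂ) : euclNorm v = ‖WithLp.toLp 2 v‖ :=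
  (EuclideanSpace.norm_eq _).symm

theorem least_squares_minimizer_unique_general
    (M N : ℕ)
    (F : Matrix (Fin M) (Fin M) ℂ) (hF : Fᴴ * F = 1)
    (emb : Fin N → Fin M) (hemb : Function.Injective emb)
    (P : Matrix (Fin M) (Fin N) ℂ)
    (hP : ∀ i j, P i j = if i = emb j then 1 else 0)
    (A : Matrix (Fin M) (Fin N) ℂ) (hA : A = F * P)
    (c : Fin M → ℂ) (x : Fin N → ℂ)
    (hx : euclNorm (A *ᵥ x - c) = euclNorm (A *ᵥ (Aᴴ *ᵥ c) - c)) :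
    x = Aᴴ *ᵥ c := by
  have hP_eq : P = (1 : Matrix (Fin M) (Fin M) ℂ).submatrix id emb := by
    ext i j
    rw [hP, submatrix_apply, id, one_apply]
  have hA_iso : Aᴴ * A = 1 := by
    rw [hA, conjTranspose_mul, Matrix.mul_assoc, ← Matrix.mul_assoc Fᴴ, hF, Matrix.one_mul, hP_eq,
      conjTranspose_one_submatrix_mul_self hemb]
  rw [euclNorm_eq_norm_toLp, euclNorm_eq_norm_toLp] at hx
  exact eq_conjTranspose_mulVec_of_norm_eq hA_iso hx

/-- **The least-squares minimizer is unique and equals Aᴴ·c for A = F·P.** -/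
theorem least_squares_minimizer_unique
    (M N : ℕ) (hM : 0 < M) (hN : 0 < N)
    (F : Matrix (Fin M) (Fin M) ℂ) (hF : Fᴴ * F = 1)
    (emb : Fin N → Fin M) (hemb : Function.Injective emb)
    (P : Matrix (Fin M) (Fin N) ℂ)
    (hP : ∀ i j, P i j = if i = emb j then 1 else 0)
    (A : Matrix (Fin M) (Fin N) ℂ) (hA : A = F * P)
    (c : Fin M → ℂ) (x : Fin N → ℂ)
    (hx : euclNorm (A *ᵥ x - c) = euclNorm (A *ᵥ (Aᴴ *ᵥ c) - c)) :
    x = Aᴴ *ᵥ c :=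
  least_squares_minimizer_unique_general M N F hF emb hemb P hP A hA c x hx
end

section
/- Let A = F·P. For every u ∈ ℂ^M, with c = b ⊙ u, the minimum value of the joint PhaseCut objective equals the PhaseCut quadratic form: ‖A·(Aᴴ·c) − c‖² = uᴴ·M_b·u, where M_b = diag(b)·(I − A·Aᴴ)·diag(b). -/
open Matrix Finset

lemma euclNorm_sq_eq_dot {M : ℕ} (v : Fin M → ℂ) :
    ((euclNorm v ^ 2 : ℝ) : ℂ) = star v ⬝ᵥ v := by
  have h : euclNorm v ^ 2 = ∑ m, ‖v m‖ ^ 2 :=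
    Real.sq_sqrt (Finset.sum_nonneg fun m _ => by positivity)
  rw [h]
  push_cast
  simp only [dotProduct, Pi.star_apply]
  refine Finset.sum_congr rfl fun m _ => ?_
  rw [Complex.star_def, mul_comm, Complex.mul_conj']

/-- **The minimum value of the joint PhaseCut objective equals the PhaseCut
quadratic form: ‖A·Aᴴ·c − c‖² = uᴴ·M_b·u with c = b ⊙ u.** -/
theorem phasecut_min_value_eq_quadratic_form
    (M N : ℕ) (hM : 0 < M) (hN : 0 < N)
    (F : Matrix (Fin M) (Fin M) ℂ) (hF : Fᴴ * F = 1)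
    (emb : Fin N → Fin M) (hemb : Function.Injective emb)
    (P : Matrix (Fin M) (Fin N) ℂ)
    (hP : ∀ i j, P i j = if i = emb j then 1 else 0)
    (A : Matrix (Fin M) (Fin N) ℂ) (hA : A = F * P)
    (b : Fin M → ℝ) (hb : ∀ m, 0 ≤ b m)
    (Mb : Matrix (Fin M) (Fin M) ℂ)
    (hMb : Mb = Matrix.diagonal (fun m => (b m : ℂ)) * (1 - A * Aᴴ) *
        Matrix.diagonal (fun m => (b m : ℂ)))
    (u : Fin M → ℂ) (c : Fin M → ℂ) (hc : c = fun m => (b m : ℂ) * u m) :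
    ((euclNorm (A *ᵥ (Aᴴ *ᵥ c) - c) ^ 2 : ℝ) : ℂ) = star u ⬝ᵥ (Mb *ᵥ u) := by
  -- AᴴA = 1
  have hPP : Pᴴ * P = 1 := by
    ext i j
    simp only [Matrix.mul_apply, conjTranspose_apply, hP, apply_ite (star : ℂ → ℂ),
      star_one, star_zero, ite_mul, one_mul, zero_mul, Finset.sum_ite_eq',
      Finset.mem_univ, if_true]
    simp [Matrix.one_apply, hemb.eq_iff]
  have hAA : Aᴴ * A = 1 := by
    rw [hA, conjTranspose_mul, Matrix.mul_assoc, ← Matrix.mul_assoc Fᴴ, hF,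
      Matrix.one_mul, hPP]
  set Q : Matrix (Fin M) (Fin M) ℂ := A * Aᴴ with hQ
  have hQH : Qᴴ = Q := by rw [hQ, conjTranspose_mul, conjTranspose_conjTranspose]
  have hQ2 : Q * Q = Q := by
    rw [hQ, Matrix.mul_assoc, ← Matrix.mul_assoc Aᴴ, hAA, Matrix.one_mul]
  set v : Fin M → ℂ := A *ᵥ (Aᴴ *ᵥ c) - c with hv
  have hvQ : v = Q *ᵥ c - c := by rw [hv, hQ, mulVec_mulVec]
  rw [euclNorm_sq_eq_dot, hvQ]
  have key : star (Q *ᵥ c - c) ⬝ᵥ (Q *ᵥ c - c) = star c ⬝ᵥ ((1 - Q) *ᵥ c) := by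
    rw [star_sub, Matrix.star_mulVec, hQH]
    rw [sub_dotProduct, dotProduct_sub, dotProduct_sub]
    rw [Matrix.dotProduct_mulVec (star c ᵥ* Q), Matrix.vecMul_vecMul, hQ2]
    rw [Matrix.dotProduct_mulVec (star c) Q, Matrix.dotProduct_mulVec (star c) (1 - Q)]
    rw [Matrix.vecMul_sub, Matrix.vecMul_one, sub_dotProduct]
    ring
  rw [key, hMb]
  have hDu : Matrix.diagonal (fun m => (b m : ℂ)) *ᵥ u = c := by
    rw [hc]; ext m; simp [mulVec_diagonal]
  have hsc : star c = star u ᵥ* Matrix.diagonal (fun m => (b m : ℂ)) := by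
    rw [hc]; ext m
    simp [vecMul_diagonal, mul_comm, Complex.star_def]
  rw [← mulVec_mulVec, ← mulVec_mulVec, hDu, Matrix.dotProduct_mulVec (star u), ← hsc]
end

section
/- Suppose u ∈ ℂ^M satisfies |u_m| = 1 for all m and the PhaseCut cost vanishes: Σ_{m ∉ Λ} |z(u)_m|² = 0. Then the reconstructed signal x := Pᴴ·z(u) ∈ ℂ^N satisfies the Fourier magnitude constraint exactly: |(A·x)_k| = b_k for every k ∈ Fin M. -/
open Matrix Finset

/-- **If the PhaseCut cost vanishes on a unit-modulus phase vector u, then the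
reconstructed signal x = Pᴴ·z(u) satisfies the Fourier magnitude constraint
|(A·x)_k| = b_k exactly.** -/
theorem zero_phasecut_cost_gives_exact_magnitude
    (M N : ℕ) (hM : 0 < M) (hN : 0 < N)
    (F : Matrix (Fin M) (Fin M) ℂ) (hF : Fᴴ * F = 1)
    (emb : Fin N → Fin M) (hemb : Function.Injective emb)
    (P : Matrix (Fin M) (Fin N) ℂ)
    (hP : ∀ i j, P i j = if i = emb j then 1 else 0)
    (A : Matrix (Fin M) (Fin N) ℂ) (hA : A = F * P)
    (b : Fin M → ℝ) (hb : ∀ m, 0 ≤ b m)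
    (z : (Fin M → ℂ) → Fin M → ℂ)
    (hz : ∀ u, z u = Fᴴ *ᵥ (fun m => (b m : ℂ) * u m))
    (u : Fin M → ℂ) (hu : ∀ m, ‖u m‖ = 1)
    (hcost : (∑ m ∈ (Finset.image emb Finset.univ)ᶜ, ‖z u m‖ ^ 2) = 0)
    (x : Fin N → ℂ) (hx : x = Pᴴ *ᵥ z u) :
    ∀ k : Fin M, ‖(A *ᵥ x) k‖ = b k := by
  have hzero : ∀ m, m ∉ Finset.image emb Finset.univ → z u m = 0 := by
    intro m hm
    have h := (Finset.sum_eq_zero_iff_of_nonneg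
      (fun i _ => by positivity)).mp hcost m (by simpa using hm)
    have hn : ‖z u m‖ = 0 := by nlinarith [norm_nonneg (z u m)]
    simpa using hn
  have hFFH : F * Fᴴ = 1 := mul_eq_one_comm.mp hF
  have hPPH : P *ᵥ (Pᴴ *ᵥ z u) = z u := by
    funext i
    simp only [Matrix.mulVec, dotProduct, Matrix.conjTranspose_apply, hP]
    have hinner : ∀ j : Fin N,
        (∑ i' : Fin M, star (if i' = emb j then (1:ℂ) else 0) * z u i') = z u (emb j) := by
      intro j
      rw [Finset.sum_eq_single (emb j)]
      · simp
      · intro i' _ hne; simp [hne]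
      · simp
    simp only [hinner]
    by_cases hi : i ∈ Finset.image emb Finset.univ
    · obtain ⟨j0, _, hj0⟩ := Finset.mem_image.mp hi
      rw [Finset.sum_eq_single j0]
      · simp [hj0.symm]
      · intro j _ hne
        have : i ≠ emb j := by
          intro h; exact hne (hemb (hj0.symm ▸ h).symm)
        simp [this]
      · simp
    · rw [hzero i hi, Finset.sum_eq_zero]
      intro j _
      have : i ≠ emb j := by
        intro h; exact hi (Finset.mem_image.mpr ⟨j, Finset.mem_univ _, h.symm⟩)
      simp [this]
  intro k
  have hAx : A *ᵥ x = fun m => (b m : ℂ) * u m := by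
    rw [hA, hx, ← Matrix.mulVec_mulVec, hPPH, hz, Matrix.mulVec_mulVec, hFFH,
      Matrix.one_mulVec]
  rw [hAx]
  simp [norm_mul, hu k, Complex.norm_real, abs_of_nonneg (hb k)]
end

section
/- Suppose the measurements are consistent, i.e., there exists x̃ ∈ ℂ^N with b_k = |(A·x̃)_k| for every k ∈ Fin M. Then there exists u ∈ ℂ^M with |u_m| = 1 for all m such that uᴴ·M_b·u = 0; i.e., the PhaseCut cost attains the value zero on the unit complex torus. -/
open Matrix

/-- **If the measurements are consistent (b = |A·x̃| for some x̃), then the PhaseCut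
cost attains the value zero at some point of the unit complex torus.** -/
theorem consistent_measurements_phasecut_cost_attains_zero
    (M N : ℕ) (hM : 0 < M) (hN : 0 < N)
    (F : Matrix (Fin M) (Fin M) ℂ) (hF : Fᴴ * F = 1)
    (emb : Fin N → Fin M) (hemb : Function.Injective emb)
    (P : Matrix (Fin M) (Fin N) ℂ)
    (hP : ∀ i j, P i j = if i = emb j then 1 else 0)
    (A : Matrix (Fin M) (Fin N) ℂ) (hA : A = F * P)
    (b : Fin M → ℝ) (hb : ∀ m, 0 ≤ b m)
    (Mb : Matrix (Fin M) (Fin M) ℂ)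
    (hMb : Mb = Matrix.diagonal (fun m => (b m : ℂ)) * (1 - A * Aᴴ) *
        Matrix.diagonal (fun m => (b m : ℂ)))
    (hconsistent : ∃ xt : Fin N → ℂ, ∀ k : Fin M, b k = ‖(A *ᵥ xt) k‖) :
    ∃ u : Fin M → ℂ, (∀ m, ‖u m‖ = 1) ∧ star u ⬝ᵥ (Mb *ᵥ u) = 0 := by
  obtain ⟨xt, hxt⟩ := hconsistent
  set y : Fin M → ℂ := A *ᵥ xt with hy
  -- AᴴA = 1
  have hPP : Pᴴ * P = (1 : Matrix (Fin N) (Fin N) ℂ) := by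
    ext j j'
    simp only [Matrix.mul_apply, Matrix.conjTranspose_apply, hP, Matrix.one_apply]
    simp only [apply_ite star, star_one, star_zero, ite_mul, one_mul, zero_mul]
    rw [Finset.sum_ite_eq' Finset.univ (emb j)]
    simp [hemb.eq_iff, Matrix.one_apply]
  have hAA : Aᴴ * A = (1 : Matrix (Fin N) (Fin N) ℂ) := by
    rw [hA, Matrix.conjTranspose_mul]
    rw [Matrix.mul_assoc, ← Matrix.mul_assoc Fᴴ F P, hF, Matrix.one_mul, hPP]
  -- (1 - A Aᴴ) y = 0
  have hkey : (1 - A * Aᴴ) *ᵥ y = 0 := by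
    rw [Matrix.sub_mulVec, Matrix.one_mulVec, hy, Matrix.mulVec_mulVec, Matrix.mul_assoc, hAA,
      Matrix.mul_one, sub_self]
  refine ⟨fun m => if y m = 0 then 1 else y m / ‖y m‖, fun m => ?_, ?_⟩
  · by_cases h : y m = 0
    · simp [h]
    · simp [h, norm_div, norm_ne_zero_iff.mpr h,
        div_self (norm_ne_zero_iff.mpr h)]
  · have hdu : (Matrix.diagonal (fun m => (b m : ℂ))) *ᵥ
        (fun m => if y m = 0 then 1 else y m / ‖y m‖) = y := by
      funext m
      rw [Matrix.mulVec_diagonal]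
      by_cases h : y m = 0
      · rw [if_pos h, mul_one, hxt m, h]; simp
      · have hn : (‖y m‖ : ℂ) ≠ 0 :=
          Complex.ofReal_ne_zero.mpr (norm_ne_zero_iff.mpr h)
        rw [if_neg h, hxt m, ← mul_div_assoc, mul_comm, mul_div_assoc, div_self hn, mul_one]
    rw [hMb, ← Matrix.mulVec_mulVec, ← Matrix.mulVec_mulVec, hdu, hkey,
      Matrix.mulVec_zero, dotProduct_zero]
end
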